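/- Let G be a locally compact topological group with a (left) Haar measure μ, let K : G → [0,∞) be measurable, let u : G → ℝ be measurable, and let φ : ℝ → ℝ be convex and differentiable at u(x). Define ℒv(x) = ∫_G (v(x) − v(y)) K(y⁻¹x) dμ(y). Fix x ∈ G and assume that the integrals defining ℒu(x) and ℒ(φ∘u)(x) converge absolutely. Then ℒ(φ∘u)(x) ≤ φ'(u(x)) · ℒu(x). -/

import Mathlib

open MeasureTheory

theorem ConvexOn.sub_le_deriv_mul_sub {S : Set ℝ} {f : ℝ → ℝ} (hf : ConvexOn ℝ S f) {a b : ℝ}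
    (ha : a ∈ S) (hb : b ∈ S) (hd : DifferentiableAt ℝ f a) :
    f a - f b ≤ deriv f a * (a - b) := by
  rcases lt_trichotomy a b with hab | rfl | hba
  · have h := hf.deriv_le_slope ha hb hab hd
    rw [slope_def_field, le_div_iff₀ (sub_pos.mpr hab)] at h
    linarith
  · simp
  · have h := hf.slope_le_deriv hb ha hba hd
    rw [slope_def_field, div_le_iff₀ (sub_pos.mpr hba)] at h
    linarith

theorem ConvexOn.integral_sub_mul_le_deriv_mul_integral {α : Type*} [MeasurableSpace α]
    {μ : Measure α} {S : Set ℝ} {f : ℝ → ℝ} (hf : ConvexOn ℝ S f) {a : ℝ} (ha : a ∈ S)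
    (hd : DifferentiableAt ℝ f a) {v w : α → ℝ} (hvS : ∀ y, v y ∈ S) (hw : ∀ y, 0 ≤ w y)
    (hv : Integrable (fun y => (a - v y) * w y) μ)
    (hfv : Integrable (fun y => (f a - f (v y)) * w y) μ) :
    ∫ y, (f a - f (v y)) * w y ∂μ ≤ deriv f a * ∫ y, (a - v y) * w y ∂μ := by
  rw [← integral_const_mul]
  refine integral_mono hfv (hv.const_mul _) fun y => ?_
  rw [← mul_assoc]
  exact mul_le_mul_of_nonneg_right (hf.sub_le_deriv_mul_sub ha (hvS y) hd) (hw y)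

theorem cordoba_cordoba_lie_group_general {G : Type*} [Group G] [MeasurableSpace G]
    (μ : Measure G)
    (K : G → ℝ) (hK0 : ∀ g, 0 ≤ K g)
    (u : G → ℝ) (x : G)
    (φ : ℝ → ℝ) (hconv : ConvexOn ℝ Set.univ φ) (hd : DifferentiableAt ℝ φ (u x))
    (h1 : Integrable (fun y => (u x - u y) * K (y⁻¹ * x)) μ)
    (h2 : Integrable (fun y => (φ (u x) - φ (u y)) * K (y⁻¹ * x)) μ) :
    ∫ y, (φ (u x) - φ (u y)) * K (y⁻¹ * x) ∂μ
      ≤ deriv φ (u x) * ∫ y, (u x - u y) * K (y⁻¹ * x) ∂μ :=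
  hconv.integral_sub_mul_le_deriv_mul_integral (Set.mem_univ _) hd (fun _ => Set.mem_univ _)
    (fun y => hK0 (y⁻¹ * x)) h1 h2

/-- **Córdoba–Córdoba inequality** for Gagliardo-type nonlocal operators
`ℒv(x) = ∫ (v(x) - v(y)) K(y⁻¹x) dμ(y)` on a locally compact topological group with
Haar measure `μ` and nonnegative kernel `K`. -/
theorem cordoba_cordoba_lie_group {G : Type*} [Group G] [TopologicalSpace G]
    [IsTopologicalGroup G] [LocallyCompactSpace G] [MeasurableSpace G] [BorelSpace G]
    (μ : Measure G) [μ.IsHaarMeasure]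
    (K : G → ℝ) (hKmeas : Measurable K) (hK0 : ∀ g, 0 ≤ K g)
    (u : G → ℝ) (humeas : Measurable u) (x : G)
    (φ : ℝ → ℝ) (hconv : ConvexOn ℝ Set.univ φ) (hd : DifferentiableAt ℝ φ (u x))
    (h1 : Integrable (fun y => (u x - u y) * K (y⁻¹ * x)) μ)
    (h2 : Integrable (fun y => (φ (u x) - φ (u y)) * K (y⁻¹ * x)) μ) :
    ∫ y, (φ (u x) - φ (u y)) * K (y⁻¹ * x) ∂μ
      ≤ deriv φ (u x) * ∫ y, (u x - u y) * K (y⁻¹ * x) ∂μ :=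
  cordoba_cordoba_lie_group_general μ K hK0 u x φ hconv hd h1 h2
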